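/- The dihedral Enneper surface of order n is minimal: for all u > 0 and v ∈ ℝ, G·e − 2F·f + E·g = 0, where E, F, G and e, f, g are the first and second fundamental forms of σⁿ; equivalently the mean curvature of σⁿ vanishes identically. -/

import Mathlib

/-! The parametrization is conformal in polar coordinates: `F = 0` and `G = u² E` with
`E = (1 + u²ⁿ)² / 4`. Its coordinates are combinations of `Re zᵏ` and `Im zᵏ` for `z = u e^{iv}`,
which are harmonic, so `u² σ_uu + σ_vv + u σ_u = 0`. Hence
`G e - 2 F f + E g = E (u² σ_uu + σ_vv) · ν = -u E (σ_u · ν) = 0`. -/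

noncomputable section
open MeasureTheory Real

/-- Dot product on `ℝ³ = ℝ × ℝ × ℝ`. -/
def dot3 (a b : ℝ × ℝ × ℝ) : ℝ := a.1 * b.1 + a.2.1 * b.2.1 + a.2.2 * b.2.2

/-- Euclidean norm on `ℝ³ = ℝ × ℝ × ℝ`. -/
def norm3 (a : ℝ × ℝ × ℝ) : ℝ := Real.sqrt (dot3 a a)

/-- Partial derivative in the first (`u`) variable. -/
def pdU {E : Type*} [NormedAddCommGroup E] [NormedSpace ℝ E] (f : ℝ × ℝ → E) (p : ℝ × ℝ) : E :=
  deriv (fun x => f (x, p.2)) p.1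

/-- Partial derivative in the second (`v`) variable. -/
def pdV {E : Type*} [NormedAddCommGroup E] [NormedSpace ℝ E] (f : ℝ × ℝ → E) (p : ℝ × ℝ) : E :=
  deriv (fun y => f (p.1, y)) p.2

/-- The dihedral Enneper parametrization `σⁿ` of order `n`. -/
def enneper (n : ℕ) (p : ℝ × ℝ) : ℝ × ℝ × ℝ :=
  (p.1 * ((2 * (n : ℝ) + 1) * Real.cos p.2 - p.1 ^ (2 * n) * Real.cos ((2 * (n : ℝ) + 1) * p.2))
      / (4 * (n : ℝ) + 2),
   -(p.1 * ((2 * (n : ℝ) + 1) * Real.sin p.2 + p.1 ^ (2 * n) * Real.sin ((2 * (n : ℝ) + 1) * p.2)))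
      / (4 * (n : ℝ) + 2),
   p.1 ^ (n + 1) * Real.cos (((n : ℝ) + 1) * p.2) / ((n : ℝ) + 1))

/-- The unit normal `ν` of the dihedral Enneper parametrization of order `n`. -/
def enneperNormal (n : ℕ) (p : ℝ × ℝ) : ℝ × ℝ × ℝ :=
  (1 + p.1 ^ (2 * n))⁻¹ •
    (2 * p.1 ^ n * Real.cos ((n : ℝ) * p.2),
     2 * p.1 ^ n * Real.sin ((n : ℝ) * p.2),
     p.1 ^ (2 * n) - 1)

theorem minimal_of_conformal_of_polar_harmonic {u : ℝ} {σu σv σuu σuv σvv ν : ℝ × ℝ × ℝ}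
    (hF : dot3 σu σv = 0) (hG : dot3 σv σv = u ^ 2 * dot3 σu σu)
    (hΔ : u ^ 2 • σuu + σvv + u • σu = 0) (hν : dot3 σu ν = 0) :
    dot3 σv σv * dot3 σuu ν - 2 * dot3 σu σv * dot3 σuv ν + dot3 σu σu * dot3 σvv ν = 0 := by
  obtain ⟨h₁, h₂, h₃⟩ := Prod.ext_iff.1 hΔ |>.imp_right Prod.ext_iff.1
  simp only [Prod.fst_add, Prod.snd_add, Prod.smul_fst, Prod.smul_snd, smul_eq_mul,
    Prod.fst_zero, Prod.snd_zero] at h₁ h₂ h₃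
  rw [hF, hG]
  set E := dot3 σu σu
  unfold dot3 at hν ⊢
  linear_combination E * (ν.1 * h₁ + ν.2.1 * h₂ + ν.2.2 * h₃) - u * E * hν

def enneperU (n : ℕ) (p : ℝ × ℝ) : ℝ × ℝ × ℝ :=
  ((cos p.2 - p.1 ^ (2 * n) * cos ((2 * (n : ℝ) + 1) * p.2)) / 2,
   -(sin p.2 + p.1 ^ (2 * n) * sin ((2 * (n : ℝ) + 1) * p.2)) / 2,
   p.1 ^ n * cos (((n : ℝ) + 1) * p.2))

def enneperV (n : ℕ) (p : ℝ × ℝ) : ℝ × ℝ × ℝ :=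
  (p.1 * (-sin p.2 + p.1 ^ (2 * n) * sin ((2 * (n : ℝ) + 1) * p.2)) / 2,
   -(p.1 * (cos p.2 + p.1 ^ (2 * n) * cos ((2 * (n : ℝ) + 1) * p.2))) / 2,
   -(p.1 ^ (n + 1) * sin (((n : ℝ) + 1) * p.2)))

def enneperUU (n : ℕ) (p : ℝ × ℝ) : ℝ × ℝ × ℝ :=
  (-(2 * n * p.1 ^ (2 * n - 1) * cos ((2 * (n : ℝ) + 1) * p.2)) / 2,
   -(2 * n * p.1 ^ (2 * n - 1) * sin ((2 * (n : ℝ) + 1) * p.2)) / 2,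
   n * p.1 ^ (n - 1) * cos (((n : ℝ) + 1) * p.2))

def enneperVV (n : ℕ) (p : ℝ × ℝ) : ℝ × ℝ × ℝ :=
  (p.1 * (-cos p.2 + (2 * n + 1) * p.1 ^ (2 * n) * cos ((2 * (n : ℝ) + 1) * p.2)) / 2,
   p.1 * (sin p.2 + (2 * n + 1) * p.1 ^ (2 * n) * sin ((2 * (n : ℝ) + 1) * p.2)) / 2,
   -((n + 1) * p.1 ^ (n + 1) * cos (((n : ℝ) + 1) * p.2)))

theorem natCast_mul_pow_sub_one_mul {R : Type*} [Semiring R] (k : ℕ) (x : R) :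
    (k : R) * x ^ (k - 1) * x = k * x ^ k := by
  rcases k with _ | k <;> simp [pow_succ, mul_assoc]

theorem hasDerivAt_cos_mul (a x : ℝ) :
    HasDerivAt (fun y => cos (a * y)) (-(a * sin (a * x))) x := by
  simpa [mul_comm] using ((hasDerivAt_id x).const_mul a).cos

theorem hasDerivAt_sin_mul (a x : ℝ) :
    HasDerivAt (fun y => sin (a * y)) (a * cos (a * x)) x := by
  simpa [mul_comm] using ((hasDerivAt_id x).const_mul a).sin

section derivatives
variable (n : ℕ) (u v : ℝ)

theorem hasDerivAt_enneper_fst :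
    HasDerivAt (fun x => enneper n (x, v)) (enneperU n (u, v)) u := by
  have hk := natCast_mul_pow_sub_one_mul (2 * n) u
  push_cast at hk
  simp only [enneper, enneperU]
  refine .prodMk ?_ (.prodMk ?_ ?_)
  · refine (((hasDerivAt_id' u).fun_mul ((hasDerivAt_const u _).fun_sub
      ((hasDerivAt_pow (2 * n) u).mul_const _))).div_const _).congr_deriv ?_
    rw [div_eq_div_iff (by positivity) two_ne_zero]
    push_cast
    linear_combination (-2 * cos ((2 * (n : ℝ) + 1) * v)) * hk
  · refine ((((hasDerivAt_id' u).fun_mul ((hasDerivAt_const u _).fun_add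
      ((hasDerivAt_pow (2 * n) u).mul_const _))).fun_neg).div_const _).congr_deriv ?_
    rw [div_eq_div_iff (by positivity) two_ne_zero]
    push_cast
    linear_combination (-2 * sin ((2 * (n : ℝ) + 1) * v)) * hk
  · refine (((hasDerivAt_pow (n + 1) u).mul_const _).div_const _).congr_deriv ?_
    simp only [Nat.add_sub_cancel]
    push_cast
    field_simp

theorem hasDerivAt_enneper_snd :
    HasDerivAt (fun y => enneper n (u, y)) (enneperV n (u, v)) v := by
  simp only [enneper, enneperV]
  refine .prodMk ?_ (.prodMk ?_ ?_)
  · refine (((((hasDerivAt_cos v).const_mul _).fun_sub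
      ((hasDerivAt_cos_mul _ v).const_mul _)).const_mul u).div_const _).congr_deriv ?_
    field_simp
    ring
  · refine (((((hasDerivAt_sin v).const_mul _).fun_add
      ((hasDerivAt_sin_mul _ v).const_mul _)).const_mul u).fun_neg.div_const _).congr_deriv ?_
    field_simp
    ring
  · refine (((hasDerivAt_cos_mul _ v).const_mul _).div_const _).congr_deriv ?_
    field_simp

theorem hasDerivAt_enneperU_fst :
    HasDerivAt (fun x => enneperU n (x, v)) (enneperUU n (u, v)) u := by
  simp only [enneperU, enneperUU]
  refine .prodMk ?_ (.prodMk ?_ ?_)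
  · exact (((hasDerivAt_const u _).fun_sub
      ((hasDerivAt_pow (2 * n) u).mul_const _)).div_const _).congr_deriv (by push_cast; ring)
  · exact (((hasDerivAt_const u _).fun_add
      ((hasDerivAt_pow (2 * n) u).mul_const _)).fun_neg.div_const _).congr_deriv
      (by push_cast; ring)
  · exact (hasDerivAt_pow n u).mul_const _

theorem hasDerivAt_enneperV_snd :
    HasDerivAt (fun y => enneperV n (u, y)) (enneperVV n (u, v)) v := by
  simp only [enneperV, enneperVV]
  refine .prodMk ?_ (.prodMk ?_ ?_)
  · exact ((((hasDerivAt_sin v).fun_neg.fun_add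
      ((hasDerivAt_sin_mul _ v).const_mul _)).const_mul u).div_const _).congr_deriv (by ring)
  · exact ((((hasDerivAt_cos v).fun_add
      ((hasDerivAt_cos_mul _ v).const_mul _)).const_mul u).fun_neg.div_const _).congr_deriv
      (by ring)
  · exact ((hasDerivAt_sin_mul _ v).const_mul _).fun_neg.congr_deriv (by ring)

end derivatives

theorem pdU_enneper (n : ℕ) : pdU (enneper n) = enneperU n :=
  funext fun p => (hasDerivAt_enneper_fst n p.1 p.2).deriv

theorem pdV_enneper (n : ℕ) : pdV (enneper n) = enneperV n :=
  funext fun p => (hasDerivAt_enneper_snd n p.1 p.2).deriv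

theorem pdU_enneperU (n : ℕ) : pdU (enneperU n) = enneperUU n :=
  funext fun p => (hasDerivAt_enneperU_fst n p.1 p.2).deriv

theorem pdV_enneperV (n : ℕ) : pdV (enneperV n) = enneperVV n :=
  funext fun p => (hasDerivAt_enneperV_snd n p.1 p.2).deriv

section trig
variable (n : ℕ) (v : ℝ)

theorem cos_add_mul_two_mul_add_one :
    cos v * cos ((2 * n + 1) * v) - sin v * sin ((2 * n + 1) * v)
      = 2 * cos ((n + 1) * v) ^ 2 - 1 := by
  rw [← cos_add, ← cos_two_mul]; ring_nf

theorem sin_add_mul_two_mul_add_one :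
    sin v * cos ((2 * n + 1) * v) + cos v * sin ((2 * n + 1) * v)
      = 2 * sin ((n + 1) * v) * cos ((n + 1) * v) := by
  rw [← sin_add, ← sin_two_mul]; ring_nf

theorem cos_sub_mul_two_mul_add_one :
    cos ((2 * n + 1) * v) * cos (n * v) + sin ((2 * n + 1) * v) * sin (n * v)
      = cos ((n + 1) * v) := by
  rw [← cos_sub]; ring_nf

theorem cos_add_mul_natCast :
    cos v * cos (n * v) - sin v * sin (n * v) = cos ((n + 1) * v) := by
  rw [← cos_add]; ring_nf

end trig

theorem dot3_enneperU_self (n : ℕ) (p : ℝ × ℝ) :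
    dot3 (enneperU n p) (enneperU n p) = (1 + p.1 ^ (2 * n)) ^ 2 / 4 := by
  simp only [dot3, enneperU]
  linear_combination (1 / 4 : ℝ) * sin_sq_add_cos_sq p.2
    + (p.1 ^ (2 * n)) ^ 2 / 4 * sin_sq_add_cos_sq ((2 * n + 1) * p.2)
    - p.1 ^ (2 * n) / 2 * cos_add_mul_two_mul_add_one n p.2

theorem dot3_enneperV_self (n : ℕ) (p : ℝ × ℝ) :
    dot3 (enneperV n p) (enneperV n p) = p.1 ^ 2 * (1 + p.1 ^ (2 * n)) ^ 2 / 4 := by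
  simp only [dot3, enneperV]
  linear_combination p.1 ^ 2 / 4 * sin_sq_add_cos_sq p.2
    + p.1 ^ 2 * (p.1 ^ (2 * n)) ^ 2 / 4 * sin_sq_add_cos_sq ((2 * n + 1) * p.2)
    + p.1 ^ 2 * p.1 ^ (2 * n) / 2 * cos_add_mul_two_mul_add_one n p.2
    + p.1 ^ 2 * p.1 ^ (2 * n) * sin_sq_add_cos_sq ((n + 1) * p.2)

theorem dot3_enneperU_enneperV (n : ℕ) (p : ℝ × ℝ) : dot3 (enneperU n p) (enneperV n p) = 0 := by
  simp only [dot3, enneperU, enneperV]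
  linear_combination p.1 * p.1 ^ (2 * n) / 2 * sin_add_mul_two_mul_add_one n p.2

theorem dot3_enneperU_enneperNormal (n : ℕ) (p : ℝ × ℝ) :
    dot3 (enneperU n p) (enneperNormal n p) = 0 := by
  simp only [dot3, enneperU, enneperNormal, Prod.smul_mk, smul_eq_mul]
  linear_combination (1 + p.1 ^ (2 * n))⁻¹ * p.1 ^ n *
    (cos_add_mul_natCast n p.2 - p.1 ^ (2 * n) * cos_sub_mul_two_mul_add_one n p.2)

theorem sq_smul_enneperUU_add_enneperVV_add_smul_enneperU (n : ℕ) (u v : ℝ) :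
    u ^ 2 • enneperUU n (u, v) + enneperVV n (u, v) + u • enneperU n (u, v) = 0 := by
  have h₂ₙ := natCast_mul_pow_sub_one_mul (2 * n) u
  have hₙ := natCast_mul_pow_sub_one_mul n u
  push_cast at h₂ₙ
  simp only [enneperU, enneperUU, enneperVV, Prod.smul_mk, smul_eq_mul, Prod.mk_add_mk,
    Prod.mk_eq_zero]
  refine ⟨?_, ?_, ?_⟩
  · linear_combination (-u * cos ((2 * n + 1) * v) / 2) * h₂ₙ
  · linear_combination (-u * sin ((2 * n + 1) * v) / 2) * h₂ₙ
  · linear_combination (u * cos ((n + 1) * v)) * hₙ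

theorem enneper_minimal_general (n : ℕ) :
    ∀ p : ℝ × ℝ, 0 < p.1 →
      dot3 (pdV (enneper n) p) (pdV (enneper n) p)
          * dot3 (pdU (pdU (enneper n)) p) (enneperNormal n p)
        - 2 * dot3 (pdU (enneper n) p) (pdV (enneper n) p)
          * dot3 (pdV (pdU (enneper n)) p) (enneperNormal n p)
        + dot3 (pdU (enneper n) p) (pdU (enneper n) p)
          * dot3 (pdV (pdV (enneper n)) p) (enneperNormal n p) = 0 := by
  rintro ⟨u, v⟩ -
  rw [pdU_enneper, pdV_enneper, pdU_enneperU, pdV_enneperV]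
  refine minimal_of_conformal_of_polar_harmonic (dot3_enneperU_enneperV n _) ?_
    (sq_smul_enneperUU_add_enneperVV_add_smul_enneperU n u v) (dot3_enneperU_enneperNormal n _)
  rw [dot3_enneperV_self, dot3_enneperU_self]
  ring

/-- the dihedral Enneper surface of order `n ≥ 1` is minimal:
`G·e − 2F·f + E·g = 0` for all `u > 0` and `v ∈ ℝ`, i.e. its mean curvature vanishes. -/
theorem enneper_minimal (n : ℕ) (hn : 1 ≤ n) :
    ∀ p : ℝ × ℝ, 0 < p.1 →
      dot3 (pdV (enneper n) p) (pdV (enneper n) p)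
          * dot3 (pdU (pdU (enneper n)) p) (enneperNormal n p)
        - 2 * dot3 (pdU (enneper n) p) (pdV (enneper n) p)
          * dot3 (pdV (pdU (enneper n)) p) (enneperNormal n p)
        + dot3 (pdU (enneper n) p) (pdU (enneper n) p)
          * dot3 (pdV (pdV (enneper n)) p) (enneperNormal n p) = 0 :=
  enneper_minimal_general n
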